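/- Let b = Π_{j=1}^N b_{a_j} be a finite Blaschke product, J₀(z) = z·b′(z)/(N·b(z)) on 𝕋, and Γ_b the unique bounded operator on L²(𝕋) with Γ_b e_n = bⁿ for all n ∈ ℤ. Then the operator Γ_b*π(J₀) maps H²(𝕋) into H²(𝕋) (equivalently, the canonical transfer operator 𝓛 = Γ_b*π(J₀) leaves H²(𝕋) invariant). -/

import Mathlib

/-!
For `n ≥ 0` and `k ≥ 1`, `⟪Γ e₋ₖ, π(J₀) eₙ⟫ = ∫ bᵏ J₀ zⁿ dm = N⁻¹ ∫ zⁿ⁺¹ bᵏ⁻¹ b′ dm`. The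
integrand is holomorphic on a disc of radius `> 1` and vanishes at `0`, so the integral is zero by
the mean value property. Hence `Γ* π(J₀) eₙ` is orthogonal to every `eⱼ` with `j < 0`, which by
completeness of the `eⱼ` means it lies in `H²`; linearity and continuity extend this to all of `H²`.
-/

open MeasureTheory Complex ComplexConjugate Topology

set_option maxHeartbeats 1000000
set_option synthInstance.maxHeartbeats 1000000

noncomputable section

namespace CompEnd

instance : MeasurableSpace Circle := borel Circle
instance : BorelSpace Circle := ⟨rfl⟩

/-- normalized Haar (Lebesgue) measure `m` on the unit circle `𝕋` -/
def m : Measure Circle := Measure.haarMeasure ⊤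

instance : IsFiniteMeasure m := by unfold m; infer_instance

/-- `L²(𝕋)` -/
abbrev L2 := Lp ℂ 2 m
/-- `L∞(𝕋)` -/
abbrev Linf := Lp ℂ ⊤ m

/-- the continuous function `z ↦ zⁿ` on the circle -/
def χ (n : ℤ) : C(Circle, ℂ) :=
  ⟨fun z => ((z ^ n : Circle) : ℂ), continuous_subtype_val.comp (continuous_zpow n)⟩

/-- the exponential basis vector `eₙ(z) = zⁿ` of `L²(𝕋)` -/
def e (n : ℤ) : L2 := ContinuousMap.toLp 2 m ℂ (χ n)

open Classical in
/-- the element of `L²(𝕋)` determined by a square-integrable function (junk value `0`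
otherwise) -/
def toL2 (φ : Circle → ℂ) : L2 := if h : MemLp φ 2 m then h.toLp φ else 0

open Classical in
/-- the element of `L∞(𝕋)` determined by an essentially bounded function (junk value `0`
otherwise) -/
def toLinf (φ : Circle → ℂ) : Linf := if h : MemLp φ ⊤ m then h.toLp φ else 0

/-- the Hardy space `H²(𝕋)`: the closed linear span of `{eₙ : n ≥ 0}` in `L²(𝕋)` -/
def H2 : Submodule ℂ L2 := (Submodule.span ℂ (Set.range fun n : ℕ => e n)).topologicalClosure

lemma H2_isClosed : IsClosed (H2 : Set L2) := Submodule.isClosed_topologicalClosure _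

instance : CompleteSpace H2 := H2_isClosed.completeSpace_coe

lemma e_mem_H2 (n : ℕ) : e n ∈ H2 :=
  Submodule.le_topologicalClosure _ (Submodule.subset_span ⟨n, rfl⟩)

/-- multiplication operator on `L²(𝕋)` by an essentially bounded function -/
def mulCLM (φ : Circle → ℂ) (hφ : MemLp φ ⊤ m) : L2 →L[ℂ] L2 :=
  LinearMap.mkContinuous
    { toFun := fun f => ((Lp.memLp f).smul (r := 2) hφ).toLp (φ • ⇑f)
      map_add' := by
        intro f g
        rw [← MemLp.toLp_add]
        apply MemLp.toLp_congr
        filter_upwards [Lp.coeFn_add f g] with x hx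
        simp only [Pi.add_apply] at hx
        simp only [Pi.smul_apply, smul_eq_mul, Pi.mul_apply, Pi.add_apply, hx]
        ring
      map_smul' := by
        intro c f
        simp only [RingHom.id_apply]
        rw [← MemLp.toLp_const_smul c ((Lp.memLp f).smul (r := 2) hφ)]
        apply MemLp.toLp_congr
        filter_upwards [Lp.coeFn_smul c f] with x hx
        simp only [Pi.smul_apply, smul_eq_mul, Pi.mul_apply] at hx ⊢
        rw [hx]
        ring }
    (eLpNorm φ ⊤ m).toReal
    (by
      intro f
      simp only [LinearMap.coe_mk, AddHom.coe_mk]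
      rw [Lp.norm_toLp, Lp.norm_def]
      rw [← ENNReal.toReal_mul]
      apply ENNReal.toReal_mono
      · exact ENNReal.mul_ne_top hφ.2.ne (Lp.eLpNorm_ne_top f)
      · exact eLpNorm_smul_le_eLpNorm_top_mul_eLpNorm 2 (Lp.aestronglyMeasurable f) φ)

open Classical in
/-- the multiplication operator `π(φ)` on `L²(𝕋)` (junk value `0` if `φ` is not
essentially bounded) -/
def mul (φ : Circle → ℂ) : L2 →L[ℂ] L2 :=
  if h : MemLp φ ⊤ m then mulCLM φ h else 0

/-- the multiplication operator `π(φ)` for `φ ∈ L∞(𝕋)` -/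
def mulL (φ : Linf) : L2 →L[ℂ] L2 := mulCLM ⇑φ (Lp.memLp φ)

/-- the Toeplitz operator `τ(φ)` on `H²(𝕋)`, i.e. the compression `P π(φ) P` of `π(φ)`
to the Hardy space -/
def toep (φ : Circle → ℂ) : H2 →L[ℂ] H2 :=
  (H2.orthogonalProjectionOnto).comp ((mul φ).comp (Submodule.subtypeL H2))

/-- the Toeplitz operator `τ(φ)` for `φ ∈ L∞(𝕋)` -/
def toepL (φ : Linf) : H2 →L[ℂ] H2 :=
  (H2.orthogonalProjectionOnto).comp ((mulL φ).comp (Submodule.subtypeL H2))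

/-- the `n`-th Fourier coefficient `f̂(n) = ∫ f(z) z̄ⁿ dm(z)` -/
def coeff (f : Circle → ℂ) (n : ℤ) : ℂ := ∫ z, f z * conj (χ n z) ∂m

/-- a boundary inner function: `b ∈ L∞(𝕋)` with `|b| = 1` a.e. and `b̂(n) = 0` for `n < 0` -/
def IsBdryInner (b : Circle → ℂ) : Prop :=
  Measurable b ∧ (∀ᵐ z ∂m, ‖b z‖ = 1) ∧ ∀ n : ℤ, n < 0 → coeff b n = 0

/-- pointwise integer powers of a unimodular function, with `b⁻ᵏ = conj(b)ᵏ` for `k > 0` -/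
def zpowFun (b : Circle → ℂ) (n : ℤ) : Circle → ℂ := fun z =>
  if 0 ≤ n then b z ^ n.toNat else conj (b z) ^ (-n).toNat

/-- the space `𝒟 = H²(𝕋) ⊖ π(b)H²(𝕋)` -/
def D (b : Circle → ℂ) : Submodule ℂ L2 := H2 ⊓ (Submodule.map (mul b).toLinearMap H2)ᗮ

open Classical in
/-- a Cuntz family of isometries on a Hilbert space:  `Sᵢ* Sⱼ = δᵢⱼ I` and
`Σᵢ Sᵢ Sᵢ* = I` in the strong operator topology -/
def IsCuntzFamily {H : Type*} [NormedAddCommGroup H] [InnerProductSpace ℂ H]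
    [CompleteSpace H] {I : Type*} (S : I → H →L[ℂ] H) : Prop :=
  (∀ i j : I, (ContinuousLinearMap.adjoint (S i)).comp (S j) =
      if i = j then ContinuousLinearMap.id ℂ H else 0) ∧
  ∀ f : H, HasSum (fun i => S i (ContinuousLinearMap.adjoint (S i) f)) f

/-- the weak-* topology `σ(L∞(𝕋), L¹(𝕋))` on `L∞(𝕋)` -/
def wstar : TopologicalSpace Linf :=
  TopologicalSpace.induced (fun φ : Linf => fun g : Lp ℂ 1 m => ∫ z, φ z * g z ∂m)
    Pi.topologicalSpace

/-- pointwise product in `L∞(𝕋)` -/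
def sMul (x y : Linf) : Linf := toLinf fun z => x z * y z
/-- the involution (pointwise complex conjugation) on `L∞(𝕋)` -/
def sStar (x : Linf) : Linf := toLinf fun z => conj (x z)
/-- the unit of `L∞(𝕋)` -/
def sOne : Linf := toLinf fun _ => 1

/-- a unital *-endomorphism of `L∞(𝕋)` -/
def IsStarEndo (β : Linf → Linf) : Prop :=
  (∀ x y, β (x + y) = β x + β y) ∧ (∀ (c : ℂ) (x), β (c • x) = c • β x) ∧
  (∀ x y, β (sMul x y) = sMul (β x) (β y)) ∧ (∀ x, β (sStar x) = sStar (β x)) ∧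
  β sOne = sOne

/-- the basis functions `eₙ` as elements of `L∞(𝕋)` -/
def eInf (n : ℤ) : Linf := toLinf (χ n)

/-- `β` is the endomorphism of `L∞(𝕋)` of composition with `b`: the (unique) weak-*
continuous unital *-endomorphism satisfying `β(eₙ) = bⁿ` for all `n ∈ ℤ` -/
def IsBeta (b : Circle → ℂ) (β : Linf → Linf) : Prop :=
  IsStarEndo β ∧ Continuous[wstar, wstar] β ∧ ∀ n : ℤ, β (eInf n) = toLinf (zpowFun b n)

/-- the Blaschke factor `b_a` with zero `a` -/
def blaschkeFactor (a : ℂ) : ℂ → ℂ := fun z =>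
  if a = 0 then z else ((‖a‖ : ℂ) / a) * ((a - z) / (1 - conj a * z))

/-- the finite Blaschke product with zeros `a 0, …, a (N-1)` (with multiplicity) -/
def finBlaschke {N : ℕ} (a : Fin N → ℂ) : ℂ → ℂ := fun z => ∏ j, blaschkeFactor (a j) z

/-- restriction of a function on `ℂ` to the unit circle -/
def res (f : ℂ → ℂ) : Circle → ℂ := fun z => f (z : ℂ)

/-- the function `J₀(z) = z b′(z) / (N b(z))` -/
def J0 {N : ℕ} (a : Fin N → ℂ) : ℂ → ℂ := fun z =>
  z * deriv (finBlaschke a) z / (N * finBlaschke a z)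

open Classical in
/-- a complex number of modulus one, regarded as an element of the circle (junk value `1`
otherwise) -/
def toCircle (w : ℂ) : Circle :=
  if h : ‖w‖ = 1 then (⟨w, by simpa [Submonoid.unitSphere] using h⟩ : Circle) else 1

/-- a finite Blaschke product as a self-map of the circle -/
def bCircle {N : ℕ} (a : Fin N → ℂ) : Circle → Circle := fun z => toCircle (finBlaschke a z)

/-- `Γ` is the operator of composition with the finite Blaschke product determined by `a`:
the (unique) bounded operator on `L²(𝕋)` with `Γ(eₙ) = bⁿ` for all `n ∈ ℤ` -/
def IsGamma {N : ℕ} (a : Fin N → ℂ) (Γ : L2 →L[ℂ] L2) : Prop :=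
  ∀ n : ℤ, Γ (e n) = toL2 (zpowFun (res (finBlaschke a)) n)

/-- `ψ` is (a representative of) the canonical transfer operator `𝓛` applied to `φ`:
`∫ ψ χ dm = ∫ J₀ φ (χ∘b) dm` for every continuous `χ` -/
def IsTransfer {N : ℕ} (a : Fin N → ℂ) (φ ψ : Circle → ℂ) : Prop :=
  ∀ g : C(Circle, ℂ), ∫ z, ψ z * g z ∂m = ∫ z, J0 a (z : ℂ) * φ z * g (bCircle a z) ∂m

open Classical in
/-- restriction of an operator on `L²(𝕋)` to `H²(𝕋)` (junk value `0` if `H²(𝕋)` is not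
invariant) -/
def rest (S : L2 →L[ℂ] L2) : H2 →L[ℂ] H2 :=
  if h : ∀ f : L2, f ∈ H2 → S f ∈ H2 then
    ⟨{ toFun := fun f => ⟨S f.1, h f.1 f.2⟩
       map_add' := fun f g => Subtype.ext (by simp)
       map_smul' := fun c f => Subtype.ext (by simp) },
     (S.continuous.comp continuous_subtype_val).subtype_mk _⟩
  else 0

open scoped InnerProductSpace NNReal ENNReal

instance : m.IsMulLeftInvariant := by unfold m; infer_instance

instance : m.Regular := by unfold m; infer_instance

instance : IsProbabilityMeasure m :=
  ⟨by rw [m, ← TopologicalSpace.PositiveCompacts.coe_top]; exact Measure.haarMeasure_self⟩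

lemma χ_apply (n : ℤ) (z : Circle) : χ n z = (z : ℂ) ^ n := rfl

lemma χ_add (i j : ℤ) : χ (i + j) = χ i * χ j := by
  ext z
  simp [χ_apply, zpow_add₀ (Circle.coe_ne_zero z)]

lemma star_χ (n : ℤ) : star (χ n) = χ (-n) := by
  ext z
  simp [χ_apply, ← Circle.coe_inv_eq_conj]

lemma coeFn_e (n : ℤ) : e n =ᵐ[m] χ n := ContinuousMap.coeFn_toLp (p := 2) (μ := m) (𝕜 := ℂ) (χ n)

lemma integral_coe_zpow_eq_zero (μ : Measure Circle) [μ.IsMulLeftInvariant] {j : ℤ} (hj : j ≠ 0) :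
    ∫ z : Circle, (z : ℂ) ^ j ∂μ = 0 := by
  -- rotating by `w` multiplies the integral by `w ^ j = -1`
  set w := Circle.exp (Real.pi / j)
  have hw : (w : ℂ) ^ j ≠ 1 := by
    rw [← Circle.coe_zpow, ← Circle.exp_intCast_mul, mul_div_cancel₀ _ (by exact_mod_cast hj)]
    exact fun h => Circle.exp_pi_ne_one (Circle.coe_injective h)
  have hrot := integral_mul_left_eq_self (fun z : Circle => (z : ℂ) ^ j) w (μ := μ)
  simp only [Circle.coe_mul, mul_zpow, integral_const_mul] at hrot
  have : ((w : ℂ) ^ j - 1) * ∫ z : Circle, (z : ℂ) ^ j ∂μ = 0 := by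
    rw [sub_mul, hrot, one_mul, sub_self]
  exact (mul_eq_zero.1 this).resolve_left (sub_ne_zero.2 hw)

lemma inner_e_e_of_ne {i j : ℤ} (h : i ≠ j) : ⟪e i, e j⟫_ℂ = 0 := by
  rw [L2.inner_def, ← integral_coe_zpow_eq_zero m (sub_ne_zero.2 h.symm)]
  refine integral_congr_ae ?_
  filter_upwards [coeFn_e i, coeFn_e j] with z hi hj
  rw [hi, hj, RCLike.inner_apply, χ_apply, χ_apply, ← Circle.coe_zpow, ← Circle.coe_zpow,
    ← Circle.coe_inv_eq_conj, ← Circle.coe_mul, ← zpow_neg, ← zpow_add, ← sub_eq_add_neg,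
    Circle.coe_zpow]

def trigSubalgebra : StarSubalgebra ℂ C(Circle, ℂ) where
  toSubalgebra := Algebra.adjoin ℂ (Set.range χ)
  star_mem' := by
    change Algebra.adjoin ℂ (Set.range χ) ≤ star (Algebra.adjoin ℂ (Set.range χ))
    refine Algebra.adjoin_le ?_
    rintro - ⟨n, rfl⟩
    exact Algebra.subset_adjoin ⟨-n, (star_χ n).symm⟩

lemma trigSubalgebra_toSubmodule :
    Subalgebra.toSubmodule trigSubalgebra.toSubalgebra = Submodule.span ℂ (Set.range χ) := by
  refine Algebra.adjoin_eq_span_of_subset ℂ (subset_trans ?_ Submodule.subset_span)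
  intro x hx
  refine Submonoid.closure_induction (fun _ => id) ⟨0, ?_⟩ ?_ hx
  · ext z
    simp [χ_apply]
  · rintro - - - - ⟨i, rfl⟩ ⟨j, rfl⟩
    exact ⟨i + j, χ_add i j⟩

lemma trigSubalgebra_topologicalClosure : trigSubalgebra.topologicalClosure = ⊤ := by
  refine ContinuousMap.starSubalgebra_topologicalClosure_eq_top_of_separatesPoints _ ?_
  intro x y hxy
  exact ⟨χ 1, ⟨χ 1, Algebra.subset_adjoin ⟨1, rfl⟩, rfl⟩,
    fun h => hxy (Circle.coe_injective (by simpa [χ_apply] using h))⟩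

lemma dense_span_e : Dense (Submodule.span ℂ (Set.range e) : Set L2) := by
  have hχ : Dense (Submodule.span ℂ (Set.range χ) : Set C(Circle, ℂ)) := by
    rw [Submodule.dense_iff_topologicalClosure_eq_top, ← trigSubalgebra_toSubmodule]
    exact congr_arg (Subalgebra.toSubmodule <| StarSubalgebra.toSubalgebra ·)
      trigSubalgebra_topologicalClosure
  have himage : ContinuousMap.toLp 2 m ℂ '' (Submodule.span ℂ (Set.range χ) : Set C(Circle, ℂ))
      = Submodule.span ℂ (Set.range e) := by
    change ((ContinuousMap.toLp 2 m ℂ : C(Circle, ℂ) →L[ℂ] L2) : C(Circle, ℂ) →ₗ[ℂ] L2) '' _ = _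
    rw [← Submodule.map_coe, ← Submodule.span_image, ← Set.range_comp]
    rfl
  rw [← himage]
  exact (ContinuousMap.toLp_denseRange ℂ m ℂ (by norm_num)).dense_image
    (ContinuousMap.toLp 2 m ℂ).continuous hχ

lemma _root_.Submodule.mem_orthogonal_span_iff {𝕜 E : Type*} [RCLike 𝕜] [NormedAddCommGroup E]
    [InnerProductSpace 𝕜 E] {s : Set E} {v : E} :
    v ∈ (Submodule.span 𝕜 s)ᗮ ↔ ∀ u ∈ s, ⟪u, v⟫_𝕜 = 0 := by
  refine ⟨fun h u hu => h u (Submodule.subset_span hu), fun h => ?_⟩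
  refine (Submodule.mem_orthogonal _ _).2 fun u hu => ?_
  refine Submodule.mem_orthogonal_singleton_iff_inner_left.1 (Submodule.span_le.2 ?_ hu)
  exact fun u hu => Submodule.mem_orthogonal_singleton_iff_inner_left.2 (h u hu)

lemma e_mem_orthogonal_H2 {j : ℤ} (hj : j < 0) : e j ∈ H2ᗮ := by
  rw [H2, Submodule.orthogonal_closure, Submodule.mem_orthogonal_span_iff]
  rintro _ ⟨n, rfl⟩
  exact inner_e_e_of_ne (by omega)

lemma mem_H2_of_inner_e_eq_zero {x : L2} (hx : ∀ j : ℤ, j < 0 → ⟪e j, x⟫_ℂ = 0) : x ∈ H2 := by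
  have hy : x - H2.starProjection x ∈ (Submodule.span ℂ (Set.range e))ᗮ := by
    rw [Submodule.mem_orthogonal_span_iff]
    rintro _ ⟨n, rfl⟩
    rcases lt_or_ge n 0 with hn | hn
    · rw [inner_sub_right, hx n hn, Submodule.inner_left_of_mem_orthogonal
        (H2.starProjection_apply_mem x) (e_mem_orthogonal_H2 hn), sub_zero]
    · lift n to ℕ using hn
      exact Submodule.inner_right_of_mem_orthogonal (e_mem_H2 n)
        (H2.sub_starProjection_mem_orthogonal x)
  rw [Submodule.topologicalClosure_eq_top_iff.1
    (Submodule.dense_iff_topologicalClosure_eq_top.1 dense_span_e), Submodule.mem_bot,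
    sub_eq_zero] at hy
  exact hy ▸ H2.starProjection_apply_mem x

lemma apply_mem_H2_of_inner_e_eq_zero (T : L2 →L[ℂ] L2)
    (hT : ∀ (n : ℕ) (j : ℤ), j < 0 → ⟪e j, T (e n)⟫_ℂ = 0) : ∀ f ∈ H2, T f ∈ H2 := by
  refine fun f hf => Submodule.topologicalClosure_minimal (t := H2.comap (T : L2 →ₗ[ℂ] L2)) _ ?_
    (H2_isClosed.preimage T.continuous) hf
  rw [Submodule.span_le]
  rintro _ ⟨n, rfl⟩
  exact mem_H2_of_inner_e_eq_zero (hT n)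

lemma integral_coe_pow (μ : Measure Circle) [IsProbabilityMeasure μ] [μ.IsMulLeftInvariant]
    (n : ℕ) :
    ∫ z : Circle, (z : ℂ) ^ n ∂μ = if n = 0 then 1 else 0 := by
  split_ifs with hn
  · simp [hn]
  · exact_mod_cast integral_coe_zpow_eq_zero μ (Int.natCast_ne_zero.2 hn)

lemma integral_comp_coe_eq_apply_zero (μ : Measure Circle) [IsProbabilityMeasure μ]
    [μ.IsMulLeftInvariant] {g : ℂ → ℂ} {R : ℝ} (hR : 1 < R)
    (hg : DifferentiableOn ℂ g (Metric.ball 0 R)) : ∫ z : Circle, g z ∂μ = g 0 := by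
  -- the power series of `g` at `0` converges absolutely on the circle, and only its constant term
  -- survives integration
  obtain ⟨r, h1r, hrR⟩ := exists_between hR
  lift r to ℝ≥0 using zero_le_one.trans h1r.le
  have hp := (hg.mono (Metric.closedBall_subset_ball hrR)).hasFPowerSeriesOnBall
    (by exact_mod_cast zero_lt_one.trans h1r)
  set c := (cauchyPowerSeries g 0 r).coeff
  have hc : Summable fun n => ‖c n‖ := by
    simpa [FormalMultilinearSeries.norm_apply_eq_norm_coef] using
      (cauchyPowerSeries g 0 r).summable_norm_mul_pow (r := 1)
        ((by exact_mod_cast h1r : ((1 : ℝ≥0) : ℝ≥0∞) < r).trans_le hp.r_le)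
  have hg_sum (z : Circle) : HasSum (fun n => c n * (z : ℂ) ^ n) (g z) := by
    have hz : (z : ℂ) ∈ Metric.eball (0 : ℂ) r := by
      rw [mem_eball_zero_iff, ← ofReal_norm, Circle.norm_coe]
      exact_mod_cast h1r
    simpa [mul_comm] using hp.hasSum hz
  have hint := hasSum_integral_of_summable_integral_norm (μ := μ)
    (F := fun n (z : Circle) => c n * (z : ℂ) ^ n)
    (fun n => Continuous.integrable_of_hasCompactSupport (X := Circle) (by fun_prop)
      (HasCompactSupport.of_compactSpace _))
    (by simpa [Circle.norm_coe] using hc)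
  simp only [integral_const_mul, integral_coe_pow] at hint
  rw [integral_congr_ae (Filter.Eventually.of_forall fun z => (hg_sum z).tsum_eq.symm),
    ← hint.tsum_eq, tsum_eq_single 0 (by simp +contextual)]
  simpa using hp.coeff_zero fun _ => 1

lemma memLp_of_continuous {φ : Circle → ℂ} (hφ : Continuous φ) (p : ℝ≥0∞) : MemLp φ p m :=
  (hφ.memLp_top_of_hasCompactSupport (.of_compactSpace φ) m).mono_exponent le_top

lemma inner_toL2_mul_apply {φ ψ : Circle → ℂ} (hφ : MemLp φ ⊤ m) (hψ : MemLp ψ 2 m) (f : L2) :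
    ⟪toL2 ψ, mul φ f⟫_ℂ = ∫ z, conj (ψ z) * φ z * f z ∂m := by
  rw [toL2, dif_pos hψ, mul, dif_pos hφ, L2.inner_def]
  refine integral_congr_ae ?_
  filter_upwards [hψ.coeFn_toLp, ((Lp.memLp f).smul (r := 2) hφ).coeFn_toLp] with z hψz hφz
  rw [RCLike.inner_apply, hψz, mulCLM, LinearMap.mkContinuous_apply]
  simp only [LinearMap.coe_mk, AddHom.coe_mk]
  rw [hφz, Pi.smul_apply', smul_eq_mul]
  ring

lemma one_sub_conj_mul_ne_zero {α z : ℂ} (h : ‖α‖ * ‖z‖ < 1) : 1 - conj α * z ≠ 0 := by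
  refine sub_ne_zero.2 fun h1 => h.ne ?_
  rw [← Complex.norm_conj α, ← norm_mul, ← h1, norm_one]

lemma differentiableAt_blaschkeFactor {α z : ℂ} (h : ‖α‖ * ‖z‖ < 1) :
    DifferentiableAt ℂ (blaschkeFactor α) z := by
  unfold blaschkeFactor
  split_ifs
  · exact differentiableAt_id
  · fun_prop (disch := exact one_sub_conj_mul_ne_zero h)

lemma blaschkeFactor_ne_zero {α z : ℂ} (hα : ‖α‖ < 1) (hz : ‖z‖ = 1) :
    blaschkeFactor α z ≠ 0 := by
  have hz0 : z ≠ 0 := norm_ne_zero_iff.1 (hz ▸ one_ne_zero)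
  unfold blaschkeFactor
  split_ifs with hα0
  · exact hz0
  · have hnum : α - z ≠ 0 := sub_ne_zero.2 fun h => hα.ne (h ▸ hz)
    have hden := one_sub_conj_mul_ne_zero (α := α) (z := z) (by rwa [hz, mul_one])
    simp [hα0, hnum, hden]

lemma finBlaschke_ne_zero {N : ℕ} {a : Fin N → ℂ} (ha : ∀ j, ‖a j‖ < 1) {z : ℂ} (hz : ‖z‖ = 1) :
    finBlaschke a z ≠ 0 :=
  Finset.prod_ne_zero_iff.2 fun j _ => blaschkeFactor_ne_zero (ha j) hz

lemma exists_one_lt_differentiableOn_finBlaschke {N : ℕ} {a : Fin N → ℂ}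
    (ha : ∀ j, ‖a j‖ < 1) :
    ∃ R, 1 < R ∧ DifferentiableOn ℂ (finBlaschke a) (Metric.ball 0 R) ∧
      DifferentiableOn ℂ (deriv (finBlaschke a)) (Metric.ball 0 R) := by
  have hev : ∀ᶠ R in 𝓝[>] (1 : ℝ), ∀ j, ‖a j‖ * R < 1 :=
    nhdsWithin_le_nhds <| Filter.eventually_all.2 fun j =>
      (continuous_const.mul continuous_id).continuousAt.eventually_lt continuousAt_const
        (by simpa using ha j)
  obtain ⟨R, hR, h1R⟩ := (hev.and self_mem_nhdsWithin).exists
  have hb : DifferentiableOn ℂ (finBlaschke a) (Metric.ball 0 R) := fun z hz => by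
    rw [mem_ball_zero_iff] at hz
    exact (DifferentiableAt.fun_finsetProd fun j _ => differentiableAt_blaschkeFactor
      ((mul_le_mul_of_nonneg_left hz.le (norm_nonneg _)).trans_lt (hR j))).differentiableWithinAt
  exact ⟨R, h1R, hb, (hb.analyticOnNhd Metric.isOpen_ball).deriv.differentiableOn⟩

lemma continuous_res_of_differentiableOn {g : ℂ → ℂ} {R : ℝ} (hR : 1 < R)
    (hg : DifferentiableOn ℂ g (Metric.ball 0 R)) : Continuous (res g) :=
  hg.continuousOn.comp_continuous continuous_subtype_val fun z => by
    rwa [mem_ball_zero_iff, Circle.norm_coe]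

lemma memLp_top_res_J0 {N : ℕ} {a : Fin N → ℂ} (ha : ∀ j, ‖a j‖ < 1) : MemLp (res (J0 a)) ⊤ m := by
  obtain ⟨R, hR, hb, hb'⟩ := exists_one_lt_differentiableOn_finBlaschke ha
  have hJ : res (J0 a) = fun z => (N : ℂ)⁻¹ * (z * res (deriv (finBlaschke a)) z *
      (res (finBlaschke a) z)⁻¹) := by
    ext z
    simp only [res, J0, div_eq_mul_inv, mul_inv]
    ring
  have hcont : Continuous (res (J0 a)) := by
    rw [hJ]
    exact continuous_const.mul (((continuous_subtype_val.mul
      (continuous_res_of_differentiableOn hR hb')).mul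
      ((continuous_res_of_differentiableOn hR hb).inv₀ fun z =>
        finBlaschke_ne_zero ha (Circle.norm_coe z))))
  exact memLp_of_continuous hcont ⊤

lemma integral_finBlaschke_pow_mul_J0_mul_pow {N : ℕ} {a : Fin N → ℂ} (ha : ∀ j, ‖a j‖ < 1)
    {k : ℕ} (hk : k ≠ 0) (n : ℕ) :
    ∫ z : Circle, finBlaschke a z ^ k * J0 a z * (z : ℂ) ^ n ∂m = 0 := by
  obtain ⟨R, hR, hb, hb'⟩ := exists_one_lt_differentiableOn_finBlaschke ha
  obtain ⟨k, rfl⟩ := Nat.exists_eq_succ_of_ne_zero hk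
  set G : ℂ → ℂ := fun z => z ^ (n + 1) * finBlaschke a z ^ k * deriv (finBlaschke a) z
  have hG : DifferentiableOn ℂ G (Metric.ball 0 R) := by fun_prop
  have hpt (z : Circle) : finBlaschke a z ^ (k + 1) * J0 a z * (z : ℂ) ^ n = (N : ℂ)⁻¹ * G z := by
    have hz := finBlaschke_ne_zero ha (Circle.norm_coe z)
    simp only [J0, G, div_eq_mul_inv, mul_inv, pow_succ]
    field_simp
  simp_rw [hpt, integral_const_mul, integral_comp_coe_eq_apply_zero m hR hG]
  simp [G]

lemma inner_toL2_zpowFun_mul_J0_e {N : ℕ} {a : Fin N → ℂ} (ha : ∀ j, ‖a j‖ < 1) {j : ℤ}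
    (hj : j < 0) (n : ℕ) :
    ⟪toL2 (zpowFun (res (finBlaschke a)) j), mul (res (J0 a)) (e n)⟫_ℂ = 0 := by
  obtain ⟨R, hR, hb, -⟩ := exists_one_lt_differentiableOn_finBlaschke ha
  have hpow : zpowFun (res (finBlaschke a)) j =
      fun z => conj (res (finBlaschke a) z) ^ (-j).toNat := by
    ext z
    simp [zpowFun, hj.not_ge]
  have hmem : MemLp (zpowFun (res (finBlaschke a)) j) 2 m := by
    rw [hpow]
    exact memLp_of_continuous
      ((continuous_conj.comp (continuous_res_of_differentiableOn hR hb)).pow _) 2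
  rw [inner_toL2_mul_apply (memLp_top_res_J0 ha) hmem,
    ← integral_finBlaschke_pow_mul_J0_mul_pow ha (k := (-j).toNat) (by omega) n]
  refine integral_congr_ae ?_
  filter_upwards [coeFn_e n] with z hz
  simp [hpow, hz, χ_apply, res]

theorem statement14_general {N : ℕ} (a : Fin N → ℂ)
    (ha : ∀ j, ‖a j‖ < 1)
    (Γ : L2 →L[ℂ] L2) (hΓ : IsGamma a Γ) :
    ∀ f : L2, f ∈ H2 → ContinuousLinearMap.adjoint Γ (mul (res (J0 a)) f) ∈ H2 := by
  refine apply_mem_H2_of_inner_e_eq_zero ((ContinuousLinearMap.adjoint Γ).comp (mul (res (J0 a))))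
    fun n j hj => ?_
  rw [ContinuousLinearMap.comp_apply, ContinuousLinearMap.adjoint_inner_right, hΓ j]
  exact inner_toL2_zpowFun_mul_J0_e ha hj n

/-- The canonical transfer operator `𝓛 = Γ_b* π(J₀)` of a finite
Blaschke product leaves the Hardy space `H²(𝕋)` invariant. -/
theorem statement14 {N : ℕ} (hN : 0 < N) (a : Fin N → ℂ)
    (ha : ∀ j, ‖a j‖ < 1)
    (Γ : L2 →L[ℂ] L2) (hΓ : IsGamma a Γ) :
    ∀ f : L2, f ∈ H2 → ContinuousLinearMap.adjoint Γ (mul (res (J0 a)) f) ∈ H2 :=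
  statement14_general a ha Γ hΓ

end CompEnd
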